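/- Metric subregularity of the normal cone map of the PSD cone: let S̄, X̄ ∈ S₊ⁿ with ⟨X̄, S̄⟩ = 0. Then there exist constants κ > 0 and ρ > 0 such that ⟨X̄, −S + S̄⟩ + κ·dist²(−S, N_{S₊ⁿ}(X̄)) ≤ 0 for all S ∈ S₊ⁿ with ‖S − S̄‖ ≤ ρ. -/

import Mathlib

open Matrix

attribute [local instance] Matrix.frobeniusNormedAddCommGroup Matrix.frobeniusNormedSpace

/-!
Let `Q` be the orthogonal projection onto the range of `X̄` and `λ` the smallest positive
eigenvalue of `X̄`, so that `X̄ ⪰ λQ` and hence `⟨X̄, S⟩ ≥ λ tr(QS)` for `S ⪰ 0`. As `⟨X̄, S̄⟩ = 0`,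
it suffices to bound `dist²(−S, N)` by a multiple of `tr(QS)`. With `R = I − Q`, the matrix
`−RSR` lies in the normal cone and `S − RSR = QS + RSQ`, whose Frobenius norm is at most
`2‖QS‖`. Finally `‖QS‖² = tr(QS²) ≤ tr S · tr(QS)` because `S² ⪯ (tr S) S`, and `tr S` stays
bounded near `S̄`.
-/

open Unitary

theorem exists_pos_forall_le_of_pos {ι : Type*} [Finite ι] (f : ι → ℝ) :
    ∃ ε > 0, ∀ i, 0 < f i → ε ≤ f i := by
  -- each of the finitely many conditions holds for all small enough `ε > 0`
  have : ∀ᶠ ε in nhdsWithin (0 : ℝ) (Set.Ioi 0), 0 < ε ∧ ∀ i, 0 < f i → ε ≤ f i :=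
    eventually_mem_nhdsWithin.and <| Filter.eventually_all.2 fun i =>
      if hi : 0 < f i then
        eventually_nhdsWithin_of_eventually_nhds <| (eventually_le_nhds hi).mono fun _ h _ => h
      else .of_forall fun _ h => absurd h hi
  exact this.exists

namespace Matrix

theorem PosSemidef.transpose_eq {ι : Type*} {A : Matrix ι ι ℝ} (hA : A.PosSemidef) : Aᵀ = A :=
  (isHermitian_iff_isSymm.1 hA.1).eq

variable {ι : Type*} [Fintype ι]

theorem frobenius_norm_sq_eq_trace {m : Type*} [Fintype m] (A : Matrix m ι ℝ) :
    ‖A‖ ^ 2 = (Aᵀ * A).trace := by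
  rw [frobenius_norm_def, ← Real.sqrt_eq_rpow, Real.sq_sqrt (by positivity), Finset.sum_comm]
  simp only [trace, diag, mul_apply, transpose_apply, Real.norm_eq_abs, Real.rpow_two, sq,
    abs_mul_abs_self]

theorem exists_trace_le_of_norm_sub_le (B : Matrix ι ι ℝ) :
    ∃ ρ > 0, ∀ A : Matrix ι ι ℝ, ‖A - B‖ ≤ ρ → A.trace ≤ B.trace + 1 := by
  obtain ⟨δ, hδ, hB⟩ := Metric.continuous_iff.1 (continuous_id.matrix_trace (n := ι) (R := ℝ))
    B 1 one_pos
  refine ⟨δ / 2, by positivity, fun A hA => ?_⟩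
  have := hB A (by rw [dist_eq_norm]; linarith)
  rw [Real.dist_eq, abs_lt] at this
  exact (sub_lt_iff_lt_add'.1 this.2).le

theorem IsStarProjection.transpose_eq {P : Matrix ι ι ℝ} (hP : IsStarProjection P) : Pᵀ = P :=
  (isHermitian_iff_isSymm.1 hP.isSelfAdjoint).eq

theorem IsStarProjection.posSemidef {P : Matrix ι ι ℝ} (hP : IsStarProjection P) :
    P.PosSemidef := by
  simpa [conjTranspose_eq_transpose_of_trivial, hP.transpose_eq, hP.isIdempotentElem.eq]
    using posSemidef_conjTranspose_mul_self P

theorem IsStarProjection.transpose_mul_mul_self {m : Type*} {P : Matrix ι ι ℝ}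
    (hP : IsStarProjection P) (A : Matrix ι m ℝ) : (P * A)ᵀ * (P * A) = Aᵀ * P * A := by
  rw [transpose_mul, hP.transpose_eq, Matrix.mul_assoc, ← Matrix.mul_assoc P,
    hP.isIdempotentElem.eq, Matrix.mul_assoc]

theorem IsStarProjection.frobenius_norm_mul_le [DecidableEq ι] {m : Type*} [Fintype m]
    {P : Matrix ι ι ℝ} (hP : IsStarProjection P) (A : Matrix ι m ℝ) : ‖P * A‖ ≤ ‖A‖ := by
  have hpythag : ‖P * A‖ ^ 2 + ‖(1 - P) * A‖ ^ 2 = ‖A‖ ^ 2 := by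
    rw [frobenius_norm_sq_eq_trace, frobenius_norm_sq_eq_trace, frobenius_norm_sq_eq_trace,
      hP.transpose_mul_mul_self, hP.one_sub.transpose_mul_mul_self, ← trace_add,
      ← Matrix.add_mul, ← Matrix.mul_add, add_sub_cancel, Matrix.mul_one]
  exact (sq_le_sq₀ (norm_nonneg _) (norm_nonneg _)).1
    (le_of_add_le_of_nonneg_left hpythag.le (sq_nonneg _))

theorem posSemidef_conjStarAlgAut_diagonal [DecidableEq ι] (U : unitary (Matrix ι ι ℝ))
    {d : ι → ℝ} (hd : 0 ≤ d) : (conjStarAlgAut ℝ _ U (diagonal d)).PosSemidef :=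
  isUnit_coe.posSemidef_star_right_conjugate_iff.2 (posSemidef_diagonal_iff.2 hd)

namespace PosSemidef

theorem trace_mul_nonneg {A B : Matrix ι ι ℝ} (hA : A.PosSemidef) (hB : B.PosSemidef) :
    0 ≤ (A * B).trace := by
  classical
  obtain ⟨C, rfl⟩ : ∃ C : Matrix ι ι ℝ, A = star C * C := by
    open scoped MatrixOrder in exact CStarAlgebra.nonneg_iff_eq_star_mul_self.mp hA.nonneg
  rw [Matrix.mul_assoc, trace_mul_comm]
  exact (hB.mul_mul_conjTranspose_same C).trace_nonneg

theorem trace_mul_le_trace_mul {Q A B : Matrix ι ι ℝ} (hQ : Q.PosSemidef)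
    (hAB : (B - A).PosSemidef) : (Q * A).trace ≤ (Q * B).trace := by
  have := hQ.trace_mul_nonneg hAB
  rwa [Matrix.mul_sub, trace_sub, sub_nonneg] at this

variable [DecidableEq ι]

theorem exists_eq_conjStarAlgAut_diagonal {S : Matrix ι ι ℝ} (hS : S.PosSemidef) :
    ∃ (U : unitary (Matrix ι ι ℝ)) (d : ι → ℝ), 0 ≤ d ∧ S = conjStarAlgAut ℝ _ U (diagonal d) :=
  ⟨_, _, hS.eigenvalues_nonneg,
    hS.1.spectral_theorem.trans (by rw [RCLike.ofReal_real_eq_id, Function.id_comp])⟩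

theorem posSemidef_trace_smul_sub_mul_self {S : Matrix ι ι ℝ} (hS : S.PosSemidef) :
    (S.trace • S - S * S).PosSemidef := by
  obtain ⟨U, d, hd, rfl⟩ := hS.exists_eq_conjStarAlgAut_diagonal
  have htrace : (conjStarAlgAut ℝ _ U (diagonal d)).trace = ∑ i, d i := by
    rw [conjStarAlgAut_apply, trace_mul_cycle, coe_star_mul_self, Matrix.one_mul, trace_diagonal]
  rw [htrace, ← map_mul, ← map_smul, ← map_sub, diagonal_mul_diagonal, ← diagonal_smul,
    diagonal_sub]
  refine posSemidef_conjStarAlgAut_diagonal _ fun i => ?_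
  have hdi : d i ≤ ∑ j, d j := Finset.single_le_sum (fun j _ => hd j) (Finset.mem_univ i)
  simpa using mul_le_mul_of_nonneg_right hdi (hd i)

theorem exists_isStarProjection_smul_le {X : Matrix ι ι ℝ} (hX : X.PosSemidef) :
    ∃ Q : Matrix ι ι ℝ, IsStarProjection Q ∧ Q * X = X ∧
      ∃ lam > (0 : ℝ), (X - lam • Q).PosSemidef := by
  obtain ⟨U, d, hd, rfl⟩ := hX.exists_eq_conjStarAlgAut_diagonal
  obtain ⟨lam, hlam, hlam_le⟩ := exists_pos_forall_le_of_pos d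
  set q : ι → ℝ := fun i => if d i = 0 then 0 else 1
  refine ⟨conjStarAlgAut ℝ _ U (diagonal q), ⟨?_, IsSelfAdjoint.map (isHermitian_diagonal q) _⟩,
    ?_, lam, hlam, ?_⟩
  · rw [IsIdempotentElem, ← map_mul, diagonal_mul_diagonal]
    congr; ext i; simp only [q]; split_ifs <;> simp
  · rw [← map_mul, diagonal_mul_diagonal]
    congr; ext i; by_cases hi : d i = 0 <;> simp [q, hi]
  · rw [← map_smul, ← map_sub, ← diagonal_smul, diagonal_sub]
    refine posSemidef_conjStarAlgAut_diagonal _ fun i => ?_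
    by_cases hi : d i = 0
    · simp [q, hi]
    · simpa [q, hi] using hlam_le i ((hd i).lt_of_ne' hi)

end PosSemidef

def psdNormalCone (X : Matrix ι ι ℝ) : Set (Matrix ι ι ℝ) :=
  {H | Hᵀ = H ∧ ∀ Y : Matrix ι ι ℝ, Y.PosSemidef → (Hᵀ * (Y - X)).trace ≤ 0}

theorem neg_mem_psdNormalCone {P X : Matrix ι ι ℝ} (hP : P.PosSemidef) (hPX : P * X = 0) :
    -P ∈ psdNormalCone X := by
  have hPT : Pᵀ = P := hP.transpose_eq
  refine ⟨by rw [transpose_neg, hPT], fun Y hY => ?_⟩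
  rw [transpose_neg, hPT, Matrix.neg_mul, Matrix.mul_sub, hPX, sub_zero, trace_neg, neg_nonpos]
  exact hP.trace_mul_nonneg hY

variable [DecidableEq ι] {Q X S : Matrix ι ι ℝ}

theorem IsStarProjection.infDist_neg_le (hQ : IsStarProjection Q) (hQX : Q * X = X)
    (hS : S.PosSemidef) : Metric.infDist (-S) (psdNormalCone X) ≤ 2 * ‖Q * S‖ := by
  set R := 1 - Q
  have hR : IsStarProjection R := hQ.one_sub
  have hRSR : (R * S * R).PosSemidef := by
    simpa [conjTranspose_eq_transpose_of_trivial, hR.transpose_eq]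
      using hS.conjTranspose_mul_mul_same R
  have hRX : R * X = 0 := by simp only [R, Matrix.sub_mul, Matrix.one_mul, hQX, sub_self]
  have hmem : -(R * S * R) ∈ psdNormalCone X :=
    neg_mem_psdNormalCone hRSR (by rw [Matrix.mul_assoc, hRX, Matrix.mul_zero])
  have hSQ : ‖S * Q‖ = ‖Q * S‖ := by
    rw [← frobenius_norm_transpose, transpose_mul, hQ.transpose_eq, hS.transpose_eq]
  calc Metric.infDist (-S) (psdNormalCone X) ≤ ‖-S - -(R * S * R)‖ :=
        dist_eq_norm (-S) _ ▸ Metric.infDist_le_dist_of_mem hmem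
    _ = ‖-(Q * S + R * (S * Q))‖ := by congr 1; simp only [R]; noncomm_ring
    _ ≤ ‖Q * S‖ + ‖S * Q‖ := (norm_neg _).trans_le <| norm_add_le_of_le le_rfl <|
        hR.frobenius_norm_mul_le _
    _ = 2 * ‖Q * S‖ := by rw [hSQ, two_mul]

theorem IsStarProjection.norm_mul_sq_le (hQ : IsStarProjection Q) (hS : S.PosSemidef) :
    ‖Q * S‖ ^ 2 ≤ S.trace * (Q * S).trace :=
  calc ‖Q * S‖ ^ 2 = (Q * (S * S)).trace := by
        rw [frobenius_norm_sq_eq_trace, hQ.transpose_mul_mul_self, hS.transpose_eq,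
          trace_mul_cycle, trace_mul_comm]
    _ ≤ (Q * (S.trace • S)).trace :=
        hQ.posSemidef.trace_mul_le_trace_mul hS.posSemidef_trace_smul_sub_mul_self
    _ = S.trace * (Q * S).trace := by rw [Matrix.mul_smul, trace_smul, smul_eq_mul]

end Matrix

/-- Metric subregularity estimate for the normal cone map of the PSD cone: for
`X̄, S̄ ∈ S₊ⁿ` with `⟨X̄, S̄⟩ = 0`, there exist `κ > 0` and `ρ > 0` such that
`⟨X̄, −S + S̄⟩ + κ · dist²(−S, N_{S₊ⁿ}(X̄)) ≤ 0` for all PSD `S` with `‖S − S̄‖ ≤ ρ`,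
where `‖·‖` is the Frobenius norm. -/
theorem psd_normalCone_metric_subregularity
    (n : ℕ) (Xb Sb : Matrix (Fin n) (Fin n) ℝ)
    (hX : Xb.PosSemidef) (hS : Sb.PosSemidef)
    (hcomp : Matrix.trace (Xb * Sb) = 0)
    (N : Set (Matrix (Fin n) (Fin n) ℝ))
    (hN : N = {H | Hᵀ = H ∧ ∀ Y : Matrix (Fin n) (Fin n) ℝ, Y.PosSemidef →
      Matrix.trace (Hᵀ * (Y - Xb)) ≤ 0}) :
    ∃ κ > (0 : ℝ), ∃ ρ > (0 : ℝ),
      ∀ S : Matrix (Fin n) (Fin n) ℝ, S.PosSemidef → ‖S - Sb‖ ≤ ρ →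
        Matrix.trace (Xbᵀ * (-S + Sb)) + κ * (Metric.infDist (-S) N) ^ 2 ≤ 0 := by
  subst hN
  obtain ⟨Q, hQ, hQX, lam, hlam, hXQ⟩ := hX.exists_isStarProjection_smul_le
  obtain ⟨ρ, hρ, htrace⟩ := Sb.exists_trace_le_of_norm_sub_le
  set c := Sb.trace + 1
  have hc : 0 < c := by linarith [hS.trace_nonneg]
  refine ⟨lam / (4 * c), by positivity, ρ, hρ, fun S hS' hSρ => ?_⟩
  have hQS : 0 ≤ (Q * S).trace := hQ.posSemidef.trace_mul_nonneg hS'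
  have hdist : Metric.infDist (-S) (psdNormalCone Xb) ^ 2 ≤ 4 * c * (Q * S).trace :=
    calc Metric.infDist (-S) (psdNormalCone Xb) ^ 2 ≤ (2 * ‖Q * S‖) ^ 2 :=
          pow_le_pow_left₀ Metric.infDist_nonneg (hQ.infDist_neg_le hQX hS') 2
      _ = 4 * ‖Q * S‖ ^ 2 := by ring
      _ ≤ 4 * (S.trace * (Q * S).trace) := by gcongr; exact hQ.norm_mul_sq_le hS'
      _ ≤ 4 * c * (Q * S).trace := by rw [mul_assoc]; gcongr; exact htrace S hSρ
  have hXS : lam * (Q * S).trace ≤ (Xb * S).trace := by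
    simpa [Matrix.mul_smul, trace_mul_comm S] using hS'.trace_mul_le_trace_mul hXQ
  have hlin : (Xbᵀ * (-S + Sb)).trace = -(Xb * S).trace := by
    rw [hX.transpose_eq, Matrix.mul_add, trace_add, hcomp, Matrix.mul_neg, trace_neg, add_zero]
  calc (Xbᵀ * (-S + Sb)).trace + lam / (4 * c) * Metric.infDist (-S) (psdNormalCone Xb) ^ 2
      ≤ -(Xb * S).trace + lam / (4 * c) * (4 * c * (Q * S).trace) := by rw [hlin]; gcongr
    _ = -(Xb * S).trace + lam * (Q * S).trace := by field_simp
    _ ≤ 0 := by linarith
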